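/- arXiv:1301.5760 — 5 statements merged into one kernel-verified Lean document; each statement's English description precedes it below -/
import Mathlib

section
/- For every n ≥ 0 and all subsets I, J ⊆ [n] with I ∪ J ≠ [n], the entry B'_n(I, J) of the matrix B'_n = U_n B_n V_n equals 0. -/
open Finset Polynomial
open scoped Classical

namespace AR

/-- `binVal I = r_n(I) - 1 = Σ_{i ∈ I} 2^(i-1)`. -/
def binVal (I : Finset ℕ) : ℕ := ∑ i ∈ I, 2 ^ (i - 1)

lemma binVal_Icc (m : ℕ) : binVal (Finset.Icc 1 m) = 2 ^ m - 1 := by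
  induction m with
  | zero => simp [binVal]
  | succ k ih =>
      rw [binVal, Finset.sum_Icc_succ_top (by omega)]
      rw [binVal] at ih
      rw [ih]
      have h1 : 1 ≤ 2 ^ k := Nat.one_le_two_pow
      simp only [Nat.add_sub_cancel, pow_succ]
      omega

lemma binVal_lt {n : ℕ} {I : Finset ℕ} (h : I ⊆ Finset.Icc 1 n) : binVal I < 2 ^ n := by
  have h1 : binVal I ≤ binVal (Finset.Icc 1 n) :=
    Finset.sum_le_sum_of_subset h
  have h2 := binVal_Icc n
  have h3 : 1 ≤ 2 ^ n := Nat.one_le_two_pow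
  omega

/-- The row/column index (zero-based, i.e. `r_n(I) - 1`) corresponding to a subset `I ⊆ [n]`. -/
def idx (n : ℕ) (I : Finset ℕ) (h : I ⊆ Finset.Icc 1 n) : Fin (2 ^ n) :=
  ⟨binVal I, binVal_lt h⟩

def blockEquiv (n : ℕ) : Fin (2 ^ n) ⊕ Fin (2 ^ n) ≃ Fin (2 ^ (n + 1)) :=
  finSumFinEquiv.trans (finCongr (by rw [pow_succ, mul_two]))

/-- The pair of Adin–Roichman matrices `(A_n, B_n)`, defined recursively. -/
def ABpair : (n : ℕ) → Matrix (Fin (2 ^ n)) (Fin (2 ^ n)) ℤ × Matrix (Fin (2 ^ n)) (Fin (2 ^ n)) ℤ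
  | 0 => (Matrix.of fun _ _ => 1, Matrix.of fun _ _ => 1)
  | n + 1 =>
      let p := ABpair n
      ((Matrix.reindex (blockEquiv n) (blockEquiv n)) (Matrix.fromBlocks p.1 p.1 p.1 (-p.2)),
       (Matrix.reindex (blockEquiv n) (blockEquiv n)) (Matrix.fromBlocks p.1 p.1 0 (-p.2)))

def A (n : ℕ) : Matrix (Fin (2 ^ n)) (Fin (2 ^ n)) ℤ := (ABpair n).1

def B (n : ℕ) : Matrix (Fin (2 ^ n)) (Fin (2 ^ n)) ℤ := (ABpair n).2

/-- `R` is a (nonempty) integer interval. -/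
def IsInterval (R : Finset ℕ) : Prop := ∃ a b : ℕ, R = Finset.Icc a b

/-- `R` is a run of `I`: a maximal nonempty interval contained in `I`. -/
def IsRun (I R : Finset ℕ) : Prop :=
  R.Nonempty ∧ IsInterval R ∧ R ⊆ I ∧
    ∀ S : Finset ℕ, IsInterval S → S ⊆ I → R ⊆ S → S = R

/-- `R` is a prefix of `S` : `min R = min S` and `R ⊆ S`. -/
def IsPrefixOf (R S : Finset ℕ) : Prop := R.min = S.min ∧ R ⊆ S

/-- `I ≫ J` : every run of `I ∩ J` is a prefix of a run of `I`. -/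
def Gg (I J : Finset ℕ) : Prop :=
  ∀ R : Finset ℕ, IsRun (I ∩ J) R → ∃ S : Finset ℕ, IsRun I S ∧ IsPrefixOf R S

/-- The set of runs of `I`. -/
noncomputable def runs (I : Finset ℕ) : Finset (Finset ℕ) :=
  I.powerset.filter (fun R => IsRun I R)

/-- `π(I)`: the product of (size + 1) over the runs of `I`. -/
noncomputable def piFun (I : Finset ℕ) : ℕ := ∏ R ∈ runs I, (R.card + 1)

/-- `π'_n(I)`: the product of (size + 1) over the runs of `I` not containing `n`. -/
noncomputable def piFun' (n : ℕ) (I : Finset ℕ) : ℕ :=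
  ∏ R ∈ (runs I).filter (fun R => n ∉ R), (R.card + 1)

/-- The subset of `[n]` encoded by a zero-based index `i : Fin (2^n)` (binary digits). -/
def decode (n : ℕ) (i : Fin (2 ^ n)) : Finset ℕ :=
  (Finset.Icc 1 n).filter (fun k => Nat.testBit i.val (k - 1))

/-- The matrix `U_n`, with `U_n(I,J) = 1` if `I ⊇ J` and `0` otherwise. -/
def U (n : ℕ) : Matrix (Fin (2 ^ n)) (Fin (2 ^ n)) ℤ :=
  Matrix.of fun i j => if decode n j ⊆ decode n i then 1 else 0

/-- The matrix `V_n = U_n⁻¹`, with `V_n(I,J) = (-1)^{|I \ J|}` if `I ⊇ J` and `0` otherwise. -/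
def V (n : ℕ) : Matrix (Fin (2 ^ n)) (Fin (2 ^ n)) ℤ :=
  Matrix.of fun i j =>
    if decode n j ⊆ decode n i then (-1) ^ ((decode n i) \ (decode n j)).card else 0

def A' (n : ℕ) : Matrix (Fin (2 ^ n)) (Fin (2 ^ n)) ℤ := U n * A n * V n

def B' (n : ℕ) : Matrix (Fin (2 ^ n)) (Fin (2 ^ n)) ℤ := U n * B n * V n

/-- `E ⪯ I` : `E ⊆ I`, `E` contains no minimal element of a run of `I`,
and `E` contains no two consecutive integers. -/
def SubPrec (E I : Finset ℕ) : Prop :=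
  E ⊆ I ∧ (∀ R : Finset ℕ, (h : IsRun I R) → R.min' h.1 ∉ E) ∧
    ∀ i : ℕ, ¬ (i ∈ E ∧ i + 1 ∈ E)

/-- `I ⇝ J` : `J = ([n] \ I) ∪ E` for some `E ⪯ I`. -/
def Step (n : ℕ) (I J : Finset ℕ) : Prop :=
  ∃ E : Finset ℕ, SubPrec E I ∧ J = (Finset.Icc 1 n \ I) ∪ E

/-- `π_μ` for a composition `μ` of `n`. -/
def piComp {n : ℕ} (μ : Composition n) : ℕ := (μ.blocks.map (· + 1)).prod

/-- `π'_μ` for a composition `μ` of `n`. -/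
def piComp' {n : ℕ} (μ : Composition n) : ℕ := (μ.blocks.dropLast.map (· + 1)).prod

/-- The Thue–Morse sequence: `thueMorse m = s₂(m) % 2`. -/
def thueMorse (m : ℕ) : ℕ := (Nat.digits 2 m).sum % 2

lemma blockEquiv_inl_val (n : ℕ) (x : Fin (2^n)) :
    ((blockEquiv n) (Sum.inl x)).val = x.val := by
  simp [blockEquiv]

lemma blockEquiv_inr_val (n : ℕ) (x : Fin (2^n)) :
    ((blockEquiv n) (Sum.inr x)).val = 2^n + x.val := by
  simp [blockEquiv, Nat.add_comm]

lemma decode_subset (n : ℕ) (i : Fin (2^n)) : decode n i ⊆ Finset.Icc 1 n :=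
  Finset.filter_subset _ _

lemma notMem_decode (n : ℕ) (i : Fin (2^n)) : n+1 ∉ decode n i := by
  intro h; have := decode_subset n i h; simp [Finset.mem_Icc] at this

lemma Icc_succ (n : ℕ) : Finset.Icc 1 (n+1) = insert (n+1) (Finset.Icc 1 n) := by
  ext k; simp [Finset.mem_Icc]; omega

lemma decode_inl (n : ℕ) (x : Fin (2^n)) :
    decode (n+1) (blockEquiv n (Sum.inl x)) = decode n x := by
  ext k
  simp only [decode, Finset.mem_filter, Finset.mem_Icc, blockEquiv_inl_val]
  constructor
  · rintro ⟨⟨h1, h2⟩, h3⟩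
    refine ⟨⟨h1, ?_⟩, h3⟩
    by_contra hk
    have hk' : k - 1 = n := by omega
    rw [hk', Nat.testBit_eq_false_of_lt x.isLt] at h3
    exact Bool.false_ne_true h3
  · rintro ⟨⟨h1, h2⟩, h3⟩
    exact ⟨⟨h1, by omega⟩, h3⟩

lemma decode_inr (n : ℕ) (x : Fin (2^n)) :
    decode (n+1) (blockEquiv n (Sum.inr x)) = insert (n+1) (decode n x) := by
  ext k
  simp only [decode, Finset.mem_filter, Finset.mem_Icc, blockEquiv_inr_val,
    Finset.mem_insert]
  constructor
  · rintro ⟨⟨h1, h2⟩, h3⟩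
    rcases Nat.lt_or_ge k (n+1) with hk | hk
    · right
      refine ⟨⟨h1, by omega⟩, ?_⟩
      rwa [Nat.testBit_two_pow_add_gt (by omega) x.val] at h3
    · left; omega
  · rintro (rfl | ⟨⟨h1, h2⟩, h3⟩)
    · refine ⟨⟨by omega, le_refl _⟩, ?_⟩
      have h4 : n + 1 - 1 = n := by omega
      rw [h4, Nat.testBit_two_pow_add_eq, Nat.testBit_eq_false_of_lt x.isLt]
      rfl
    · refine ⟨⟨h1, by omega⟩, ?_⟩
      rwa [Nat.testBit_two_pow_add_gt (by omega) x.val]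

lemma idx_inl (n : ℕ) (I : Finset ℕ) (h : I ⊆ Finset.Icc 1 (n+1)) (h' : I ⊆ Finset.Icc 1 n) :
    idx (n+1) I h = blockEquiv n (Sum.inl (idx n I h')) := by
  apply Fin.ext; rw [blockEquiv_inl_val]; rfl

lemma idx_inr (n : ℕ) (I : Finset ℕ) (h : I ⊆ Finset.Icc 1 (n+1)) (hn : n+1 ∈ I)
    (h' : I.erase (n+1) ⊆ Finset.Icc 1 n) :
    idx (n+1) I h = blockEquiv n (Sum.inr (idx n (I.erase (n+1)) h')) := by
  apply Fin.ext; rw [blockEquiv_inr_val]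
  show binVal I = 2^n + binVal (I.erase (n+1))
  conv_lhs => rw [← Finset.insert_erase hn]
  rw [binVal, Finset.sum_insert (Finset.notMem_erase _ _)]
  simp [binVal]

lemma decode_idx : ∀ (n : ℕ) (I : Finset ℕ) (h : I ⊆ Finset.Icc 1 n),
    decode n (idx n I h) = I := by
  intro n
  induction n with
  | zero =>
    intro I h
    have hI : I = ∅ := Finset.subset_empty.mp (by simpa using h)
    subst hI
    have h0 : Finset.Icc 1 0 = (∅ : Finset ℕ) := Finset.Icc_eq_empty (by omega)
    simp [decode, h0]
  | succ n ih =>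
    intro I h
    by_cases hn : n+1 ∈ I
    · have h' : I.erase (n+1) ⊆ Finset.Icc 1 n := by
        intro a ha
        have h1 := h (Finset.mem_of_mem_erase ha)
        have h2 := Finset.ne_of_mem_erase ha
        simp only [Finset.mem_Icc] at *
        omega
      rw [idx_inr n I h hn h', decode_inr, ih, Finset.insert_erase hn]
    · have h' : I ⊆ Finset.Icc 1 n := by
        intro a ha
        have h1 := h ha
        have h2 : a ≠ n+1 := fun he => hn (he ▸ ha)
        simp only [Finset.mem_Icc] at *
        omega
      rw [idx_inl n I h h', decode_inl, ih]

lemma sdiff_insert_insert {a : ℕ} {s t : Finset ℕ} (hs : a ∉ s) :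
    insert a s \ insert a t = s \ t := by
  ext k
  simp only [Finset.mem_sdiff, Finset.mem_insert]
  constructor
  · rintro ⟨ha | hk, h2⟩
    · exact absurd (Or.inl ha) h2
    · exact ⟨hk, fun h => h2 (Or.inr h)⟩
  · rintro ⟨h1, h2⟩
    exact ⟨Or.inr h1, fun h => by rcases h with rfl | h; exact hs h1; exact h2 h⟩

lemma U_succ (n : ℕ) : U (n+1) = (Matrix.reindex (blockEquiv n) (blockEquiv n))
    (Matrix.fromBlocks (U n) 0 (U n) (U n)) := by
  have key : ∀ x y, U (n+1) (blockEquiv n x) (blockEquiv n y) =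
      Matrix.fromBlocks (U n) 0 (U n) (U n) x y := by
    rintro (x | x) (y | y)
    · simp only [U, Matrix.of_apply, decode_inl, Matrix.fromBlocks_apply₁₁]
    · simp only [U, Matrix.of_apply, decode_inl, decode_inr, Matrix.fromBlocks_apply₁₂,
        Matrix.zero_apply]
      rw [if_neg]
      intro hsub
      exact notMem_decode n x (hsub (Finset.mem_insert_self _ _))
    · simp only [U, Matrix.of_apply, decode_inl, decode_inr, Matrix.fromBlocks_apply₂₁]
      simp only [Finset.subset_insert_iff_of_notMem (notMem_decode n y)]
    · simp only [U, Matrix.of_apply, decode_inr, Matrix.fromBlocks_apply₂₂]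
      simp only [Finset.insert_subset_insert_iff (notMem_decode n y)]
  ext i j
  rw [Matrix.reindex_apply, Matrix.submatrix_apply,
    ← key ((blockEquiv n).symm i) ((blockEquiv n).symm j),
    Equiv.apply_symm_apply, Equiv.apply_symm_apply]

lemma V_succ (n : ℕ) : V (n+1) = (Matrix.reindex (blockEquiv n) (blockEquiv n))
    (Matrix.fromBlocks (V n) 0 (-(V n)) (V n)) := by
  have key : ∀ x y, V (n+1) (blockEquiv n x) (blockEquiv n y) =
      Matrix.fromBlocks (V n) 0 (-(V n)) (V n) x y := by
    rintro (x | x) (y | y)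
    · simp only [V, Matrix.of_apply, decode_inl, Matrix.fromBlocks_apply₁₁]
    · simp only [V, Matrix.of_apply, decode_inl, decode_inr, Matrix.fromBlocks_apply₁₂,
        Matrix.zero_apply]
      rw [if_neg]
      intro hsub
      exact notMem_decode n x (hsub (Finset.mem_insert_self _ _))
    · simp only [V, Matrix.of_apply, decode_inl, decode_inr, Matrix.fromBlocks_apply₂₁,
        Matrix.neg_apply]
      simp only [Finset.subset_insert_iff_of_notMem (notMem_decode n y)]
      by_cases hsub : decode n y ⊆ decode n x
      · rw [if_pos hsub, if_pos hsub,
          Finset.insert_sdiff_of_notMem _ (notMem_decode n y),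
          Finset.card_insert_of_notMem (fun h => notMem_decode n x (Finset.mem_sdiff.mp h).1),
          pow_succ]
        ring
      · rw [if_neg hsub, if_neg hsub, neg_zero]
    · simp only [V, Matrix.of_apply, decode_inr, Matrix.fromBlocks_apply₂₂]
      simp only [Finset.insert_subset_insert_iff (notMem_decode n y),
        sdiff_insert_insert (notMem_decode n x)]
  ext i j
  rw [Matrix.reindex_apply, Matrix.submatrix_apply,
    ← key ((blockEquiv n).symm i) ((blockEquiv n).symm j),
    Equiv.apply_symm_apply, Equiv.apply_symm_apply]

lemma AB'_succ (n : ℕ) :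
    A' (n+1) = (Matrix.reindex (blockEquiv n) (blockEquiv n))
      (Matrix.fromBlocks 0 (A' n) (A' n + B' n) (A' n - B' n)) ∧
    B' (n+1) = (Matrix.reindex (blockEquiv n) (blockEquiv n))
      (Matrix.fromBlocks 0 (A' n) (B' n) (A' n - B' n)) := by
  have hA : A (n+1) = (Matrix.reindex (blockEquiv n) (blockEquiv n))
      (Matrix.fromBlocks (A n) (A n) (A n) (-(B n))) := rfl
  have hB : B (n+1) = (Matrix.reindex (blockEquiv n) (blockEquiv n))
      (Matrix.fromBlocks (A n) (A n) 0 (-(B n))) := rfl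
  have e1 : Matrix.fromBlocks (U n) 0 (U n) (U n) *
      Matrix.fromBlocks (A n) (A n) (A n) (-(B n)) *
      Matrix.fromBlocks (V n) 0 (-(V n)) (V n) =
      Matrix.fromBlocks 0 (A' n) (A' n + B' n) (A' n - B' n) := by
    rw [Matrix.fromBlocks_multiply, Matrix.fromBlocks_multiply, Matrix.fromBlocks_inj]
    refine ⟨?_, ?_, ?_, ?_⟩ <;> (try simp only [A', B']) <;> noncomm_ring
  have e2 : Matrix.fromBlocks (U n) 0 (U n) (U n) *
      Matrix.fromBlocks (A n) (A n) 0 (-(B n)) *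
      Matrix.fromBlocks (V n) 0 (-(V n)) (V n) =
      Matrix.fromBlocks 0 (A' n) (B' n) (A' n - B' n) := by
    rw [Matrix.fromBlocks_multiply, Matrix.fromBlocks_multiply, Matrix.fromBlocks_inj]
    refine ⟨?_, ?_, ?_, ?_⟩ <;> (try simp only [A', B']) <;> noncomm_ring
  constructor
  · rw [A', U_succ n, V_succ n, hA]
    simp only [Matrix.reindex_apply]
    rw [Matrix.submatrix_mul_equiv, Matrix.submatrix_mul_equiv, e1]
  · rw [B', U_succ n, V_succ n, hB]
    simp only [Matrix.reindex_apply]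
    rw [Matrix.submatrix_mul_equiv, Matrix.submatrix_mul_equiv, e2]

lemma key_zero (n : ℕ) : ∀ i j : Fin (2^n),
    decode n i ∪ decode n j ≠ Finset.Icc 1 n → A' n i j = 0 ∧ B' n i j = 0 := by
  induction n with
  | zero =>
    intro i j h
    exfalso; apply h
    have h0 : Finset.Icc 1 0 = (∅ : Finset ℕ) := Finset.Icc_eq_empty (by omega)
    simp [decode, h0]
  | succ n ih =>
    intro i j h
    obtain ⟨x, rfl⟩ := (blockEquiv n).surjective i
    obtain ⟨y, rfl⟩ := (blockEquiv n).surjective j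
    rw [(AB'_succ n).1, (AB'_succ n).2]
    simp only [Matrix.reindex_apply, Matrix.submatrix_apply, Equiv.symm_apply_apply]
    rcases x with x | x <;> rcases y with y | y
    · simp
    · rw [decode_inl, decode_inr] at h
      have h' : decode n x ∪ decode n y ≠ Finset.Icc 1 n := by
        intro he; apply h
        rw [Finset.union_insert, he, ← Icc_succ]
      obtain ⟨hA0, hB0⟩ := ih x y h'
      simp [hA0]
    · rw [decode_inl, decode_inr] at h
      have h' : decode n x ∪ decode n y ≠ Finset.Icc 1 n := by
        intro he; apply h
        rw [Finset.insert_union, he, ← Icc_succ]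
      obtain ⟨hA0, hB0⟩ := ih x y h'
      constructor
      · simp [Matrix.add_apply, hA0, hB0]
      · simp [hB0]
    · rw [decode_inr, decode_inr] at h
      have h' : decode n x ∪ decode n y ≠ Finset.Icc 1 n := by
        intro he; apply h
        rw [Finset.insert_union, Finset.union_insert, Finset.insert_idem, he, ← Icc_succ]
      obtain ⟨hA0, hB0⟩ := ih x y h'
      constructor <;> simp [Matrix.sub_apply, hA0, hB0]

theorem stmt12 (n : ℕ) (I J : Finset ℕ) (hI : I ⊆ Finset.Icc 1 n) (hJ : J ⊆ Finset.Icc 1 n)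
    (hIJ : I ∪ J ≠ Finset.Icc 1 n) :
    B' n (idx n I hI) (idx n J hJ) = 0 := by
  have h' : decode n (idx n I hI) ∪ decode n (idx n J hJ) ≠ Finset.Icc 1 n := by
    rw [decode_idx, decode_idx]; exact hIJ
  exact (key_zero n _ _ h').2

end AR
end

section
/- For every n ≥ 1, there exists a bijection σ : {1, …, 2^n} → P([n]) such that: (a) σ(2i) = [n] \ σ(2i−1) for all 1 ≤ i ≤ 2^{n−1}; (b) 1 ∈ σ(2i−1) for all 1 ≤ i ≤ 2^{n−1}; and (c) whenever σ(i) ⇝ σ(j), either σ(j) = [n] \ σ(i) or j ≤ i. -/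
open Finset Polynomial
open scoped Classical

namespace AR

/-! ### Auxiliary construction for stmt16 -/

/-- partial sum of agreement bits. -/
def sigS (n t k : ℕ) : ℕ :=
  ∑ j ∈ Finset.Ico 1 k, (if Nat.testBit ((t - 1) / 2) (n - 1 - j) then 1 else 0)

/-- The explicit bijection. -/
def sig (n t : ℕ) : Finset ℕ :=
  (Finset.Icc 1 n).filter fun k => (t + k + sigS n t k) % 2 = 0

lemma mem_sig {n t k : ℕ} :
    k ∈ sig n t ↔ (1 ≤ k ∧ k ≤ n) ∧ (t + k + sigS n t k) % 2 = 0 := by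
  simp [sig, Finset.mem_filter, Finset.mem_Icc]

lemma sigS_succ (n t k : ℕ) (hk : 1 ≤ k) :
    sigS n t (k + 1)
      = sigS n t k + (if Nat.testBit ((t - 1) / 2) (n - 1 - k) then 1 else 0) := by
  rw [sigS, Finset.sum_Ico_succ_top hk, sigS]

lemma agree_iff {n t k : ℕ} (hk : 1 ≤ k) (hk2 : k + 1 ≤ n) :
    Nat.testBit ((t - 1) / 2) (n - 1 - k) = true ↔ (k ∈ sig n t ↔ k + 1 ∈ sig n t) := by
  rw [mem_sig, mem_sig, sigS_succ n t k hk]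
  cases h : Nat.testBit ((t - 1) / 2) (n - 1 - k) <;> simp [h] <;> omega

lemma one_mem_sig_iff {n t : ℕ} (hn : 1 ≤ n) : 1 ∈ sig n t ↔ t % 2 = 1 := by
  rw [mem_sig]
  have : sigS n t 1 = 0 := by simp [sigS]
  rw [this]
  omega

lemma q_lt {n t : ℕ} (hn : 1 ≤ n) (ht : t ≤ 2 ^ n) : (t - 1) / 2 < 2 ^ (n - 1) := by
  have h : 2 ^ n = 2 ^ (n - 1) * 2 := by
    rw [← pow_succ, Nat.sub_add_cancel hn]
  have h2 : 1 ≤ 2 ^ (n - 1) := Nat.one_le_two_pow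
  omega

lemma high_bit_false {n t m : ℕ} (hn : 1 ≤ n) (ht : t ≤ 2 ^ n) (hm : n - 1 ≤ m) :
    Nat.testBit ((t - 1) / 2) m = false := by
  apply Nat.testBit_eq_false_of_lt
  calc (t - 1) / 2 < 2 ^ (n - 1) := q_lt hn ht
    _ ≤ 2 ^ m := Nat.pow_le_pow_right (by norm_num) hm

lemma sig_injOn {n : ℕ} (hn : 1 ≤ n) {t t' : ℕ} (ht : 1 ≤ t) (ht2 : t ≤ 2 ^ n)
    (ht' : 1 ≤ t') (ht'2 : t' ≤ 2 ^ n) (h : sig n t = sig n t') : t = t' := by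
  have hpar : t % 2 = t' % 2 := by
    have := (one_mem_sig_iff (t := t) hn).symm.trans
      (h ▸ one_mem_sig_iff (t := t') hn)
    omega
  have hq : (t - 1) / 2 = (t' - 1) / 2 := by
    apply Nat.eq_of_testBit_eq
    intro p
    by_cases hp : n - 1 ≤ p
    · rw [high_bit_false hn ht2 hp, high_bit_false hn ht'2 hp]
    · set k := n - 1 - p with hkdef
      have hk1 : 1 ≤ k := by omega
      have hk2 : k + 1 ≤ n := by omega
      have hpk : n - 1 - k = p := by omega
      have h1 := agree_iff (t := t) hk1 hk2
      have h2 := agree_iff (t := t') hk1 hk2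
      rw [hpk] at h1 h2
      rw [Bool.eq_iff_iff, h1, h2, h]
  omega

/-- If `e ∈ I`, `e` is not the minimum of any run of `I`, and `I` has only positive
elements, then `e - 1 ∈ I` and `e ≥ 2`. -/
lemma run_pred {I : Finset ℕ} (hI : ∀ x ∈ I, 1 ≤ x) {e : ℕ} (he : e ∈ I)
    (hmin : ∀ R : Finset ℕ, (h : IsRun I R) → R.min' h.1 ≠ e) :
    e - 1 ∈ I ∧ 2 ≤ e := by
  classical
  set A := (Finset.Icc 0 e).filter (fun x => Finset.Icc x e ⊆ I) with hA
  have heA : e ∈ A := by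
    simp only [hA, Finset.mem_filter, Finset.mem_Icc]
    refine ⟨⟨Nat.zero_le _, le_refl _⟩, ?_⟩
    rw [Finset.Icc_self]
    simpa using he
  have hAne : A.Nonempty := ⟨e, heA⟩
  set a := A.min' hAne with ha
  have haA : a ∈ A := Finset.min'_mem _ _
  have haIcc : Finset.Icc a e ⊆ I := (Finset.mem_filter.mp haA).2
  have hae : a ≤ e := by
    have := (Finset.mem_filter.mp haA).1; simp only [Finset.mem_Icc] at this; omega
  have hIne : I.Nonempty := ⟨e, he⟩
  set M := I.max' hIne with hM
  set B := (Finset.Icc e M).filter (fun y => Finset.Icc e y ⊆ I) with hB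
  have heB : e ∈ B := by
    simp only [hB, Finset.mem_filter, Finset.mem_Icc]
    refine ⟨⟨le_refl _, Finset.le_max' _ _ he⟩, ?_⟩
    rw [Finset.Icc_self]
    simpa using he
  have hBne : B.Nonempty := ⟨e, heB⟩
  set b := B.max' hBne with hb
  have hbB : b ∈ B := Finset.max'_mem _ _
  have hbIcc : Finset.Icc e b ⊆ I := (Finset.mem_filter.mp hbB).2
  have heb : e ≤ b := Finset.le_max' _ _ heB
  have hRsub : Finset.Icc a b ⊆ I := by
    intro k hk
    rw [Finset.mem_Icc] at hk
    by_cases hke : k ≤ e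
    · exact haIcc (Finset.mem_Icc.mpr ⟨hk.1, hke⟩)
    · exact hbIcc (Finset.mem_Icc.mpr ⟨by omega, hk.2⟩)
  have hrun : IsRun I (Finset.Icc a b) := by
    refine ⟨Finset.nonempty_Icc.mpr (le_trans hae heb), ⟨a, b, rfl⟩, hRsub, ?_⟩
    rintro S ⟨c, d, rfl⟩ hSI hRS
    have haS : a ∈ Finset.Icc c d := hRS (Finset.mem_Icc.mpr ⟨le_refl _, le_trans hae heb⟩)
    have hbS : b ∈ Finset.Icc c d := hRS (Finset.mem_Icc.mpr ⟨le_trans hae heb, le_refl _⟩)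
    rw [Finset.mem_Icc] at haS hbS
    have hcA : c ∈ A := by
      simp only [hA, Finset.mem_filter, Finset.mem_Icc]
      refine ⟨⟨Nat.zero_le _, by omega⟩, ?_⟩
      intro x hx
      rw [Finset.mem_Icc] at hx
      exact hSI (Finset.mem_Icc.mpr ⟨hx.1, by omega⟩)
    have hac : a ≤ c := Finset.min'_le _ _ hcA
    have hdB : d ∈ B := by
      simp only [hB, Finset.mem_filter, Finset.mem_Icc]
      have hdI : d ∈ I := hSI (Finset.mem_Icc.mpr ⟨by omega, le_refl _⟩)
      refine ⟨⟨by omega, Finset.le_max' _ _ hdI⟩, ?_⟩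
      intro x hx
      rw [Finset.mem_Icc] at hx
      exact hSI (Finset.mem_Icc.mpr ⟨by omega, hx.2⟩)
    have hdb : d ≤ b := Finset.le_max' _ _ hdB
    have : c = a := by omega
    have : d = b := by omega
    subst_vars
    rfl
  have hminR : (Finset.Icc a b).min' hrun.1 = a := by
    apply le_antisymm
    · exact Finset.min'_le _ _ (Finset.mem_Icc.mpr ⟨le_refl _, le_trans hae heb⟩)
    · apply Finset.le_min'
      intro y hy
      exact (Finset.mem_Icc.mp hy).1
  have hane : a ≠ e := by
    have := hmin _ hrun
    rwa [hminR] at this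
  have haI : a ∈ I := haIcc (Finset.mem_Icc.mpr ⟨le_refl _, hae⟩)
  have ha1 : 1 ≤ a := hI a haI
  have he2 : 2 ≤ e := by omega
  exact ⟨haIcc (Finset.mem_Icc.mpr ⟨by omega, by omega⟩), he2⟩

theorem stmt16 (n : ℕ) (hn : 1 ≤ n) :
    ∃ σ : ℕ → Finset ℕ,
      Set.BijOn σ (Set.Icc 1 (2 ^ n)) {J : Finset ℕ | J ⊆ Finset.Icc 1 n} ∧
      (∀ i : ℕ, 1 ≤ i → i ≤ 2 ^ (n - 1) → σ (2 * i) = Finset.Icc 1 n \ σ (2 * i - 1)) ∧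
      (∀ i : ℕ, 1 ≤ i → i ≤ 2 ^ (n - 1) → 1 ∈ σ (2 * i - 1)) ∧
      (∀ i j : ℕ, i ∈ Set.Icc 1 (2 ^ n) → j ∈ Set.Icc 1 (2 ^ n) →
        Step n (σ i) (σ j) → σ j = Finset.Icc 1 n \ σ i ∨ j ≤ i) := by
  refine ⟨sig n, ?_, ?_, ?_, ?_⟩
  · -- BijOn
    have hinj : Set.InjOn (sig n) (Set.Icc 1 (2 ^ n)) := by
      intro t ht t' ht' h
      exact sig_injOn hn ht.1 ht.2 ht'.1 ht'.2 h
    have himg : sig n '' Set.Icc 1 (2 ^ n) = {J : Finset ℕ | J ⊆ Finset.Icc 1 n} := by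
      have h1 : {J : Finset ℕ | J ⊆ Finset.Icc 1 n} = ↑(Finset.Icc 1 n).powerset := by
        ext J; rw [Set.mem_setOf_eq, Finset.mem_coe, Finset.mem_powerset]
      apply Set.eq_of_subset_of_ncard_le
      · rintro _ ⟨t, _, rfl⟩
        exact Finset.filter_subset _ _
      · rw [h1, Set.ncard_coe_finset, Finset.card_powerset, Nat.card_Icc,
          Set.ncard_image_of_injOn hinj, ← Finset.coe_Icc, Set.ncard_coe_finset,
          Nat.card_Icc]
        simp
      · rw [h1]; exact (Finset.Icc 1 n).powerset.finite_toSet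
    refine ⟨fun t _ => Finset.filter_subset _ _, hinj, ?_⟩
    exact himg.superset
  · -- complement pairs
    intro i hi _
    have hq : (2 * i - 1) / 2 = (2 * i - 1 - 1) / 2 := by omega
    have hS : ∀ k, sigS n (2 * i) k = sigS n (2 * i - 1) k := by
      intro k; simp only [sigS, hq]
    ext k
    simp only [mem_sig, Finset.mem_sdiff, Finset.mem_Icc, hS]
    omega
  · -- 1 ∈ odd positions
    intro i hi _
    rw [one_mem_sig_iff hn]
    omega
  · -- condition (c)
    intro i j hi hj hstep
    obtain ⟨E, ⟨hEI, hEmin, _⟩, hJ⟩ := hstep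
    by_cases hEe : E = ∅
    · left; rw [hJ, hEe, Finset.union_empty]
    · right
      have hEne : E.Nonempty := Finset.nonempty_iff_ne_empty.mpr hEe
      set e := E.min' hEne with hee
      have heE : e ∈ E := Finset.min'_mem _ _
      have hminE : ∀ x ∈ E, e ≤ x := fun x hx => Finset.min'_le _ _ hx
      have hIpos : ∀ x ∈ sig n i, 1 ≤ x := fun x hx =>
        (Finset.mem_Icc.mp (Finset.filter_subset _ _ hx)).1
      have heI : e ∈ sig n i := hEI heE
      have hen : e ≤ n := (Finset.mem_Icc.mp (Finset.filter_subset _ _ heI)).2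
      obtain ⟨heI1, he2⟩ := run_pred hIpos heI
        (fun R h hc => hEmin R h (hc ▸ heE))
      have heJ : e ∈ sig n j := by rw [hJ]; exact Finset.mem_union_right _ heE
      have he1J : e - 1 ∉ sig n j := by
        rw [hJ]
        intro hc
        rcases Finset.mem_union.mp hc with hc | hc
        · exact (Finset.mem_sdiff.mp hc).2 heI1
        · have := hminE _ hc; omega
      have hlowJ : ∀ k, k < e →
          (k ∈ sig n j ↔ (k ∈ Finset.Icc 1 n ∧ k ∉ sig n i)) := by
        intro k hk
        rw [hJ, Finset.mem_union, Finset.mem_sdiff]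
        constructor
        · rintro (h | h)
          · exact h
          · exact absurd (hminE _ h) (by omega)
        · exact fun h => Or.inl h
      have he1 : e - 1 + 1 = e := by omega
      have hne : n - 1 - (e - 1) = n - e := by omega
      have hagI : (e - 1 ∈ sig n i ↔ e - 1 + 1 ∈ sig n i) := by
        rw [he1]; exact iff_of_true heI1 heI
      have hbitI : Nat.testBit ((i - 1) / 2) (n - e) = true := by
        have h := (agree_iff (n := n) (t := i) (k := e - 1) (by omega) (by omega)).mpr hagI
        rwa [hne] at h
      have hbitJ : Nat.testBit ((j - 1) / 2) (n - e) = false := by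
        rw [← Bool.not_eq_true]
        intro hc
        have h := (agree_iff (n := n) (t := j) (k := e - 1) (by omega) (by omega)).mp
          (by rwa [hne])
        rw [he1] at h
        exact he1J (h.mpr heJ)
      have hhigh : ∀ m, n - e < m →
          Nat.testBit ((j - 1) / 2) m = Nat.testBit ((i - 1) / 2) m := by
        intro m hm
        by_cases hm2 : n - 1 ≤ m
        · rw [high_bit_false hn hj.2 hm2, high_bit_false hn hi.2 hm2]
        · set k := n - 1 - m with hk
          have hk1 : 1 ≤ k := by omega
          have hk2 : k + 1 ≤ n := by omega
          have hke : k + 1 ≤ e - 1 := by omega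
          have hmk : n - 1 - k = m := by omega
          have h1 := agree_iff (t := i) hk1 hk2
          have h2 := agree_iff (t := j) hk1 hk2
          rw [hmk] at h1 h2
          rw [Bool.eq_iff_iff, h1, h2]
          have hkI : k ∈ Finset.Icc 1 n := Finset.mem_Icc.mpr ⟨hk1, by omega⟩
          have hkI1 : k + 1 ∈ Finset.Icc 1 n := Finset.mem_Icc.mpr ⟨by omega, by omega⟩
          rw [hlowJ k (by omega), hlowJ (k + 1) (by omega), eq_true hkI, eq_true hkI1,
            true_and, true_and]
          constructor
          · intro h
            constructor
            · intro hki
              by_contra hc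
              exact (h.mpr (fun hc' => absurd hki (fun _ => hc hc'))) hki
            · intro hki
              by_contra hc
              exact (h.mp (fun hc' => absurd hki (fun _ => hc hc'))) hki
          · intro h
            constructor
            · intro hkj hc
              exact hkj (h.mpr hc)
            · intro hkj hc
              exact hkj (h.mp hc)
      have hlt : (j - 1) / 2 < (i - 1) / 2 := Nat.lt_of_testBit (n - e) hbitJ hbitI hhigh
      have hj1 : 1 ≤ j := hj.1
      have hi1 : 1 ≤ i := hi.1
      omega


end AR
end

section
/- For every n ≥ 1, the function σ_n : {1, …, 2^n} → P([n]) defined by t ∈ σ_n(i) if and only if |({1} ∪ [n−t+2, n]) \ r_n^{−1}(i)| is odd, is a bijection and satisfies: (a) σ_n(2i) = [n] \ σ_n(2i−1) for all 1 ≤ i ≤ 2^{n−1}; (b) 1 ∈ σ_n(2i−1) for all 1 ≤ i ≤ 2^{n−1}; and (c) whenever σ_n(i) ⇝ σ_n(j), either σ_n(j) = [n] \ σ_n(i) or j ≤ i. -/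
open Finset Polynomial
open scoped Classical

namespace AR

/-! The entry `t` of `σ_n(r_n(I))` is the parity of `[1 ∉ I] + #([n-t+2, n] \ I)`, so consecutive
entries `t - 1, t` agree exactly when `n - t + 2 ∈ I`, while the entry `1` records whether `1 ∉ I`.
Hence `I` can be read back from `σ_n(r_n(I))`, and adding `1` to `I` (passing from the odd index
`2i - 1` to `2i`) complements it. For (c), let `σ_n(j) = ([n] \ σ_n(i)) ∪ E` with `E ≠ ∅` and
`e = min E`. Below `e` the set `σ_n(j)` is the complement of `σ_n(i)`, both contain `e`, and since
`e` starts no run of `σ_n(i)`, `e - 1 ∈ σ_n(i) \ σ_n(j)`. So `r_n^{-1}(i)` and `r_n^{-1}(j)` agree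
above `n - e + 2`, which lies in the first and not in the second: `j < i` in the binary order. -/

lemma two_mul_binVal {I : Finset ℕ} (hI : 0 ∉ I) : 2 * binVal I = ∑ i ∈ I, 2 ^ i := by
  rw [binVal, mul_sum]
  refine sum_congr rfl fun i hi => ?_
  rw [← pow_succ', Nat.sub_add_cancel (Nat.pos_of_ne_zero (ne_of_mem_of_not_mem hi hI))]

lemma binVal_lt_binVal_iff {I J : Finset ℕ} (hI : 0 ∉ I) (hJ : 0 ∉ J) :
    binVal I < binVal J ↔ toColex I < toColex J := by
  rw [← geomSum_lt_geomSum_iff_toColex_lt_toColex le_rfl, ← two_mul_binVal hI,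
    ← two_mul_binVal hJ]
  omega

lemma binVal_lt_binVal_of_forall_lt {I J : Finset ℕ} (hI : 0 ∉ I) (hJ : 0 ∉ J) {m : ℕ}
    (hmI : m ∈ I) (hmJ : m ∉ J) (hagree : ∀ k, m < k → (k ∈ J ↔ k ∈ I)) :
    binVal J < binVal I := by
  rw [binVal_lt_binVal_iff hJ hI, Colex.toColex_lt_toColex_iff_exists_forall_lt]
  refine ⟨m, hmI, hmJ, fun k hkJ hkI => ?_⟩
  by_contra! hk
  rcases hk.eq_or_lt with rfl | hk
  · exact hmJ hkJ
  · exact hkI ((hagree k hk).1 hkJ)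

lemma binVal_injOn : Set.InjOn binVal {I | 0 ∉ I} := fun I hI J hJ h =>
  geomSum_injective le_rfl (by simp only [← two_mul_binVal hI, ← two_mul_binVal hJ, h])

lemma binVal_insert_one {I : Finset ℕ} (h : 1 ∉ I) : binVal (insert 1 I) = binVal I + 1 := by
  rw [binVal, sum_insert h, binVal, add_comm]
  rfl

lemma odd_binVal_iff {I : Finset ℕ} (h0 : 0 ∉ I) : Odd (binVal I) ↔ 1 ∈ I := by
  have heven : Even (binVal (I.erase 1)) := even_sum _ fun i hi =>
    Nat.even_pow.2 ⟨even_two, by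
      have := ne_of_mem_of_not_mem (mem_of_mem_erase hi) h0
      have := ne_of_mem_erase hi
      omega⟩
  by_cases h : 1 ∈ I
  · rw [← insert_erase h, binVal_insert_one (notMem_erase 1 I), Nat.odd_add_one]
    simpa using heven
  · rw [erase_eq_of_notMem h] at heven
    simpa [h] using heven

lemma setOf_subset_eq_coe_powerset {α : Type*} (s : Finset α) :
    {I : Finset α | I ⊆ s} = ↑s.powerset := by
  ext
  simp

lemma zero_notMem_of_subset_Icc {I : Finset ℕ} {n : ℕ} (hI : I ⊆ Icc 1 n) : 0 ∉ I :=
  fun h0 => by simpa using hI h0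

lemma bijOn_one_add_binVal (n : ℕ) :
    Set.BijOn (fun I => 1 + binVal I) {I | I ⊆ Icc 1 n} (Set.Icc 1 (2 ^ n)) := by
  have hinj : Set.InjOn (fun I => 1 + binVal I) {I | I ⊆ Icc 1 n} := fun I hI J hJ h =>
    binVal_injOn (zero_notMem_of_subset_Icc hI) (zero_notMem_of_subset_Icc hJ)
      (Nat.add_left_cancel h)
  have hmaps : Set.MapsTo (fun I => 1 + binVal I) {I | I ⊆ Icc 1 n} (Set.Icc 1 (2 ^ n)) :=
    fun I hI => Set.mem_Icc.2 ⟨Nat.le_add_right 1 _, by have := binVal_lt hI; dsimp only; omega⟩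
  refine ⟨hmaps, hinj, ?_⟩
  have hcard :
      (Set.Icc 1 (2 ^ n)).ncard ≤ ((fun I => 1 + binVal I) '' {I | I ⊆ Icc 1 n}).ncard := by
    rw [hinj.ncard_image, setOf_subset_eq_coe_powerset, Set.ncard_coe_finset, card_powerset,
      Nat.card_Icc, Set.ncard_Icc_nat, Nat.add_sub_cancel, Nat.add_sub_cancel]
  exact (Set.eq_of_subset_of_ncard_le hmaps.image_subset hcard (Set.finite_Icc _ _)).symm.subset

lemma isRun_Icc {K : Finset ℕ} {a b : ℕ} (hab : a ≤ b) (hK : Icc a b ⊆ K)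
    (ha : ∀ c, c + 1 = a → c ∉ K) (hb : b + 1 ∉ K) : IsRun K (Icc a b) := by
  refine ⟨nonempty_Icc.2 hab, ⟨a, b, rfl⟩, hK, ?_⟩
  rintro S ⟨a', b', rfl⟩ hS hsub
  have ha' := mem_Icc.1 (hsub (left_mem_Icc.2 hab))
  have hb' := mem_Icc.1 (hsub (right_mem_Icc.2 hab))
  obtain rfl : a' = a := by
    by_contra
    exact ha (a - 1) (by omega) (hS (mem_Icc.2 ⟨by omega, by omega⟩))
  obtain rfl : b' = b := by
    by_contra
    exact hb (hS (mem_Icc.2 ⟨by omega, by omega⟩))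
  rfl

lemma exists_isRun_min'_eq {K : Finset ℕ} {a : ℕ} (haK : a ∈ K) (ha : ∀ c, c + 1 = a → c ∉ K) :
    ∃ R, ∃ h : IsRun K R, R.min' h.1 = a := by
  have hex : ∃ d, a + d + 1 ∉ K := ⟨K.sup id, fun h => by
    have := le_sup (f := id) h
    simp only [id_eq] at this
    omega⟩
  have hrun : Icc a (a + Nat.find hex) ⊆ K := by
    intro x hx
    obtain ⟨k, rfl⟩ := Nat.exists_eq_add_of_le (mem_Icc.1 hx).1
    cases k with
    | zero => simpa using haK
    | succ k => exact not_not.1 (Nat.find_min hex (by have := (mem_Icc.1 hx).2; omega))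
  refine ⟨_, isRun_Icc (Nat.le_add_right _ _) hrun ha (Nat.find_spec hex), ?_⟩
  exact le_antisymm (min'_le _ _ (left_mem_Icc.2 (Nat.le_add_right _ _)))
    (le_min' _ _ _ fun x hx => (mem_Icc.1 hx).1)

lemma SubPrec.exists_pred_mem {E K : Finset ℕ} (h : SubPrec E K) {e : ℕ} (he : e ∈ E) :
    ∃ c, c + 1 = e ∧ c ∈ K := by
  by_contra! hc
  obtain ⟨R, hR, hmin⟩ := exists_isRun_min'_eq (h.1 he) hc
  exact h.2.1 R hR (hmin ▸ he)

/-- `sigmaSet n I = σ_n(r_n(I))`. -/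
def sigmaSet (n : ℕ) (I : Finset ℕ) : Finset ℕ :=
  (Icc 1 n).filter fun t => Odd #(insert 1 (Icc (n - t + 2) n) \ I)

section sigmaSet

variable {n : ℕ} {I J : Finset ℕ}

lemma mem_sigmaSet {t : ℕ} :
    t ∈ sigmaSet n I ↔ t ∈ Icc 1 n ∧ Odd #(insert 1 (Icc (n - t + 2) n) \ I) :=
  mem_filter

lemma one_mem_sigmaSet_iff (hn : 1 ≤ n) : 1 ∈ sigmaSet n I ↔ 1 ∉ I := by
  rw [mem_sigmaSet, Icc_eq_empty (show ¬n - 1 + 2 ≤ n by omega)]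
  by_cases h : 1 ∈ I
  · rw [insert_sdiff_of_mem _ h]
    simp [h]
  · rw [insert_sdiff_of_notMem _ h]
    simp [h, hn]

lemma mem_iff_mem_sigmaSet_iff {m : ℕ} (h2 : 2 ≤ m) (hm : m ≤ n) :
    m ∈ I ↔ (n - m + 2 ∈ sigmaSet n I ↔ n - m + 1 ∈ sigmaSet n I) := by
  have hsplit : insert 1 (Icc m n) = insert m (insert 1 (Icc (m + 1) n)) := by
    ext
    simp only [mem_insert, mem_Icc]
    omega
  have hm' : m ∉ insert 1 (Icc (m + 1) n) := by simp only [mem_insert, mem_Icc]; omega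
  have ht : n - m + 2 ∈ Icc 1 n := mem_Icc.2 ⟨by omega, by omega⟩
  have ht' : n - m + 1 ∈ Icc 1 n := mem_Icc.2 ⟨by omega, by omega⟩
  simp only [mem_sigmaSet, ht, ht', true_and, show n - (n - m + 2) + 2 = m by omega,
    show n - (n - m + 1) + 2 = m + 1 by omega, hsplit]
  by_cases hmI : m ∈ I
  · simp [insert_sdiff_of_mem _ hmI, hmI]
  · rw [insert_sdiff_of_notMem _ hmI, card_insert_of_notMem (fun h => hm' (mem_sdiff.1 h).1)]
    simp only [Nat.odd_add_one, hmI, false_iff]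
    tauto

lemma sigmaSet_insert_one (hI : 1 ∉ I) : sigmaSet n (insert 1 I) = Icc 1 n \ sigmaSet n I := by
  ext t
  have hsd : insert 1 (Icc (n - t + 2) n) \ I =
      insert 1 (insert 1 (Icc (n - t + 2) n) \ insert 1 I) := by
    ext x
    by_cases x = 1 <;> simp [*]
  rw [mem_sdiff, mem_sigmaSet, mem_sigmaSet, hsd, card_insert_of_notMem (by simp),
    Nat.odd_add_one]
  tauto

lemma sigmaSet_injOn (hn : 1 ≤ n) : Set.InjOn (sigmaSet n) {I | I ⊆ Icc 1 n} := by
  intro I hI J hJ h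
  ext m
  by_cases hm1 : m = 1
  · subst hm1
    rw [← not_iff_not, ← one_mem_sigmaSet_iff hn, ← one_mem_sigmaSet_iff hn, h]
  by_cases hm : 2 ≤ m ∧ m ≤ n
  · rw [mem_iff_mem_sigmaSet_iff hm.1 hm.2, mem_iff_mem_sigmaSet_iff hm.1 hm.2, h]
  · have hm' : m ∉ Icc 1 n := by rw [mem_Icc]; omega
    exact iff_of_false (fun h' => hm' (hI h')) (fun h' => hm' (hJ h'))

lemma sigmaSet_bijOn (hn : 1 ≤ n) :
    Set.BijOn (sigmaSet n) {I | I ⊆ Icc 1 n} {I | I ⊆ Icc 1 n} := by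
  have hfin : {I | I ⊆ Icc 1 n}.Finite := by
    rw [setOf_subset_eq_coe_powerset]
    exact finite_toSet _
  exact (hfin.injOn_iff_bijOn_of_mapsTo fun I _ => filter_subset _ _).1 (sigmaSet_injOn hn)

lemma sigmaSet_step (hI : I ⊆ Icc 1 n) (hJ : J ⊆ Icc 1 n)
    (hstep : Step n (sigmaSet n I) (sigmaSet n J)) :
    sigmaSet n J = Icc 1 n \ sigmaSet n I ∨ binVal J ≤ binVal I := by
  obtain ⟨E, hE, hJE⟩ := hstep
  rcases E.eq_empty_or_nonempty with rfl | hne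
  · exact Or.inl (by rw [hJE, union_empty])
  right
  set e := E.min' hne
  have heE : e ∈ E := min'_mem E hne
  have heI : e ∈ sigmaSet n I := hE.1 heE
  have heJ : e ∈ sigmaSet n J := hJE ▸ mem_union_right _ heE
  obtain ⟨c, hce, hcI⟩ := hE.exists_pred_mem heE
  have hbelow : ∀ t < e, (t ∈ sigmaSet n J ↔ t ∈ Icc 1 n ∧ t ∉ sigmaSet n I) := fun t ht => by
    rw [hJE, mem_union, mem_sdiff, or_iff_left fun htE => (min'_le E t htE).not_gt ht]
  have hc := mem_Icc.1 (filter_subset _ _ hcI)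
  have he := mem_Icc.1 (filter_subset _ _ heI)
  obtain ⟨m, hme, hmc, hm2, hmn⟩ : ∃ m, n - m + 2 = e ∧ n - m + 1 = c ∧ 2 ≤ m ∧ m ≤ n :=
    ⟨n - e + 2, by omega, by omega, by omega, by omega⟩
  have hmI : m ∈ I := by
    rw [mem_iff_mem_sigmaSet_iff hm2 hmn, hme, hmc]
    exact iff_of_true heI hcI
  have hmJ : m ∉ J := by
    rw [mem_iff_mem_sigmaSet_iff hm2 hmn, hme, hmc, hbelow c (by omega)]
    simp [heJ, hcI]
  refine (binVal_lt_binVal_of_forall_lt (zero_notMem_of_subset_Icc hI)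
    (zero_notMem_of_subset_Icc hJ) hmI hmJ fun k hk => ?_).le
  by_cases hkn : k ≤ n
  · rw [mem_iff_mem_sigmaSet_iff (by omega) hkn, mem_iff_mem_sigmaSet_iff (by omega) hkn,
      hbelow _ (by omega), hbelow _ (by omega)]
    simp only [mem_Icc, show 1 ≤ n - k + 2 ∧ n - k + 2 ≤ n by omega,
      show 1 ≤ n - k + 1 ∧ n - k + 1 ≤ n by omega, true_and]
    exact not_iff_not
  · exact iff_of_false (fun h => hkn (mem_Icc.1 (hJ h)).2) (fun h => hkn (mem_Icc.1 (hI h)).2)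

lemma exists_one_notMem_one_add_binVal_eq {i : ℕ} (hi1 : 1 ≤ i) (hi2 : i ≤ 2 ^ (n - 1)) :
    ∃ I ⊆ Icc 1 n, 1 ∉ I ∧ 1 + binVal I = 2 * i - 1 := by
  have hle : 2 * i - 1 ≤ 2 ^ n := by
    rcases n with _ | n
    · simp only [zero_tsub, pow_zero] at hi2 ⊢
      omega
    · rw [pow_succ']
      simp only [Nat.add_sub_cancel] at hi2
      omega
  obtain ⟨I, hI, hIi⟩ := (bijOn_one_add_binVal n).surjOn
    (show 2 * i - 1 ∈ Set.Icc 1 (2 ^ n) from ⟨by omega, hle⟩)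
  refine ⟨I, hI, fun h1 => ?_, hIi⟩
  have hodd := (odd_binVal_iff (zero_notMem_of_subset_Icc hI)).2 h1
  rw [show binVal I = 2 * (i - 1) by dsimp only at hIi; omega] at hodd
  exact Nat.not_even_iff_odd.2 hodd (even_two_mul _)

end sigmaSet

theorem stmt17 (n : ℕ) (hn : 1 ≤ n) (σ : ℕ → Finset ℕ)
    (hσ : ∀ I : Finset ℕ, I ⊆ Finset.Icc 1 n →
      σ (1 + binVal I) =
        (Finset.Icc 1 n).filter
          (fun t => Odd ((insert 1 (Finset.Icc (n - t + 2) n) \ I).card))) :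
    Set.BijOn σ (Set.Icc 1 (2 ^ n)) {J : Finset ℕ | J ⊆ Finset.Icc 1 n} ∧
    (∀ i : ℕ, 1 ≤ i → i ≤ 2 ^ (n - 1) → σ (2 * i) = Finset.Icc 1 n \ σ (2 * i - 1)) ∧
    (∀ i : ℕ, 1 ≤ i → i ≤ 2 ^ (n - 1) → 1 ∈ σ (2 * i - 1)) ∧
    (∀ i j : ℕ, i ∈ Set.Icc 1 (2 ^ n) → j ∈ Set.Icc 1 (2 ^ n) →
      Step n (σ i) (σ j) → σ j = Finset.Icc 1 n \ σ i ∨ j ≤ i) := by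
  have hσ' : ∀ I ∈ {I | I ⊆ Icc 1 n}, σ (1 + binVal I) = sigmaSet n I := hσ
  have hidx := bijOn_one_add_binVal n
  have hodd : ∀ i, 1 ≤ i → i ≤ 2 ^ (n - 1) →
      σ (2 * i) = Icc 1 n \ σ (2 * i - 1) ∧ 1 ∈ σ (2 * i - 1) := by
    intro i hi1 hi2
    obtain ⟨I, hI, h1, hIi⟩ := exists_one_notMem_one_add_binVal_eq hi1 hi2
    have hI1 : insert 1 I ⊆ Icc 1 n := insert_subset (mem_Icc.2 ⟨le_rfl, hn⟩) hI
    have hIi' : 1 + binVal (insert 1 I) = 2 * i := by rw [binVal_insert_one h1]; omega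
    rw [← hIi, ← hIi', hσ' I hI, hσ' _ hI1, sigmaSet_insert_one h1, one_mem_sigmaSet_iff hn]
    exact ⟨rfl, h1⟩
  refine ⟨?_, fun i h1 h2 => (hodd i h1 h2).1, fun i h1 h2 => (hodd i h1 h2).2, ?_⟩
  · have h := (sigmaSet_bijOn hn).congr (f₂ := σ ∘ fun I => 1 + binVal I)
      fun I hI => (hσ' I hI).symm
    rwa [Set.bijOn_comp_iff hidx.injOn, hidx.image_eq] at h
  · rintro i j hi hj hstep
    obtain ⟨I, hI, rfl⟩ := hidx.surjOn hi
    obtain ⟨J, hJ, rfl⟩ := hidx.surjOn hj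
    rw [hσ' I hI, hσ' J hJ] at hstep ⊢
    exact (sigmaSet_step hI hJ hstep).imp_right (Nat.add_le_add_left · 1)

end AR
end

section
/- For every n ≥ 1, every j with 1 ≤ j ≤ n, and every subset I ⊆ [n] with i = r_n(I), the cardinality |({1} ∪ [n−j+2, n]) \ I| is odd if and only if t_{⌊(i−1)/2^{n+1−j}⌋} ≡ i + j (mod 2), where (t_m)_{m≥0} is the Thue–Morse sequence. -/
open Finset Polynomial
open scoped Classical

namespace AR

/-!
Dividing `binVal I = Σ_{i ∈ I} 2^(i-1)` by `2 ^ (n + 1 - j)` keeps exactly the bits of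
`I ∩ [n - j + 2, n]`, so the Thue–Morse value is the parity of `|I ∩ [n - j + 2, n]|`, while the
parity of `binVal I` records whether `1 ∈ I`. Together they give the parity of
`|({1} ∪ [n - j + 2, n]) ∩ I|`, and the set `{1} ∪ [n - j + 2, n]` has `j` elements.
-/

theorem digits_two_sum_eq_length_bitIndices (n : ℕ) :
    (Nat.digits 2 n).sum = n.bitIndices.length := by
  induction n using Nat.evenOddRec with
  | h0 => simp
  | h_even n ih =>
    rcases Nat.eq_zero_or_pos n with rfl | hn
    · simp
    · rw [← zero_add (2 * n), Nat.digits_add 2 one_lt_two 0 n two_pos (Or.inr hn.ne')]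
      simp [ih]
  | h_odd n ih =>
    rw [add_comm, Nat.digits_add 2 one_lt_two 1 n one_lt_two (Or.inl one_ne_zero),
      add_comm 1, Nat.bitIndices_two_mul_add_one]
    simp [ih, add_comm]

theorem thueMorse_sum_two_pow (s : Finset ℕ) : thueMorse (∑ i ∈ s, 2 ^ i) = #s % 2 := by
  rw [thueMorse, digits_two_sum_eq_length_bitIndices,
    ← List.toFinset_card_of_nodup Nat.bitIndices_nodup, toFinset_bitIndices_sum_two_pow]

section binVal

variable {I : Finset ℕ}

theorem binVal_eq_sum_image_pred (hI : ∀ k ∈ I, 1 ≤ k) :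
    binVal I = ∑ i ∈ I.image (· - 1), 2 ^ i := by
  rw [binVal, sum_image fun a ha b hb hab => by have := hI a ha; have := hI b hb; omega]

theorem thueMorse_binVal (hI : ∀ k ∈ I, 1 ≤ k) : thueMorse (binVal I) = #I % 2 := by
  rw [binVal_eq_sum_image_pred hI, thueMorse_sum_two_pow,
    card_image_of_injOn fun a ha b hb hab => by have := hI a ha; have := hI b hb; omega]

theorem binVal_eq_add_two_pow_mul (I : Finset ℕ) (m : ℕ) :
    binVal I = binVal (I.filter (· ≤ m)) + 2 ^ m * binVal ((I.filter (m < ·)).image (· - m)) := by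
  have hshift : binVal ((I.filter (m < ·)).image (· - m)) =
      ∑ k ∈ I.filter (m < ·), 2 ^ (k - m - 1) := by
    rw [binVal, sum_image fun a ha b hb hab => by
      simp only [coe_filter, Set.mem_ofPred_eq] at ha hb; omega]
  have hlow : I.filter (· ≤ m) = I.filter (¬ m < ·) := filter_congr fun k _ => by omega
  rw [hshift, mul_sum, hlow, binVal, binVal, ← sum_filter_not_add_sum_filter I (m < ·)]
  congr 1
  refine sum_congr rfl fun k hk => ?_
  rw [← pow_add]
  congr 1
  have := (mem_filter.1 hk).2
  omega

theorem binVal_filter_le_lt_two_pow (hI : ∀ k ∈ I, 1 ≤ k) (m : ℕ) :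
    binVal (I.filter (· ≤ m)) < 2 ^ m :=
  binVal_lt fun k hk => by
    rw [mem_filter] at hk
    exact mem_Icc.2 ⟨hI k hk.1, hk.2⟩

theorem binVal_div_two_pow (hI : ∀ k ∈ I, 1 ≤ k) (m : ℕ) :
    binVal I / 2 ^ m = binVal ((I.filter (m < ·)).image (· - m)) := by
  rw [binVal_eq_add_two_pow_mul I m, Nat.add_mul_div_left _ _ (by positivity),
    Nat.div_eq_of_lt (binVal_filter_le_lt_two_pow hI m), zero_add]

theorem binVal_mod_two_pow (hI : ∀ k ∈ I, 1 ≤ k) (m : ℕ) :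
    binVal I % 2 ^ m = binVal (I.filter (· ≤ m)) := by
  rw [binVal_eq_add_two_pow_mul I m, Nat.add_mul_mod_self_left,
    Nat.mod_eq_of_lt (binVal_filter_le_lt_two_pow hI m)]

theorem binVal_mod_two (hI : ∀ k ∈ I, 1 ≤ k) : binVal I % 2 = if 1 ∈ I then 1 else 0 := by
  have hfilter : I.filter (· ≤ 1) = I.filter (· = 1) :=
    filter_congr fun k hk => by have := hI k hk; omega
  rw [← pow_one 2, binVal_mod_two_pow hI, hfilter, filter_eq' I 1]
  split_ifs <;> simp [binVal]

theorem thueMorse_binVal_div_two_pow (hI : ∀ k ∈ I, 1 ≤ k) (m : ℕ) :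
    thueMorse (binVal I / 2 ^ m) = #(I.filter (m < ·)) % 2 := by
  have hinj : Set.InjOn (· - m) (I.filter (m < ·) : Set ℕ) := fun a ha b hb hab => by
    simp only [coe_filter, Set.mem_ofPred_eq] at ha hb hab
    omega
  rw [binVal_div_two_pow hI, thueMorse_binVal, card_image_of_injOn hinj]
  simp only [mem_image, mem_filter]
  rintro _ ⟨k, ⟨-, hk⟩, rfl⟩
  omega

theorem Icc_succ_inter_eq_filter_lt {n : ℕ} (hI : I ⊆ Icc 1 n) (m : ℕ) :
    Icc (m + 1) n ∩ I = I.filter (m < ·) := by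
  ext k
  have hk : k ∈ I → k ≤ n := fun h => (mem_Icc.1 (hI h)).2
  simp only [mem_inter, mem_Icc, mem_filter]
  constructor
  · rintro ⟨⟨hmk, -⟩, hkI⟩
    exact ⟨hkI, hmk⟩
  · rintro ⟨hkI, hmk⟩
    exact ⟨⟨hmk, hk hkI⟩, hkI⟩

end binVal

theorem stmt18_general (n j : ℕ) (hj1 : 1 ≤ j) (hjn : j ≤ n)
    (I : Finset ℕ) (hI : I ⊆ Finset.Icc 1 n) :
    (Odd ((insert 1 (Finset.Icc (n - j + 2) n) \ I).card) ↔
      thueMorse (((1 + binVal I) - 1) / 2 ^ (n + 1 - j)) ≡ (1 + binVal I) + j [MOD 2]) := by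
  have hpos : ∀ k ∈ I, 1 ≤ k := fun k hk => (mem_Icc.1 (hI hk)).1
  rw [show n - j + 2 = n + 1 - j + 1 by omega]
  have h1 : 1 ∉ Icc (n + 1 - j + 1) n := by rw [mem_Icc]; omega
  have hinter : #(insert 1 (Icc (n + 1 - j + 1) n) ∩ I) =
      (if 1 ∈ I then 1 else 0) + #(I.filter (n + 1 - j < ·)) := by
    rw [← Icc_succ_inter_eq_filter_lt hI]
    by_cases h1I : 1 ∈ I
    · rw [insert_inter_of_mem h1I, card_insert_of_notMem fun h => h1 (mem_inter.1 h).1,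
        if_pos h1I, add_comm]
    · rw [insert_inter_of_notMem h1I, if_neg h1I, zero_add]
  have hcard : #(insert 1 (Icc (n + 1 - j + 1) n)) = j := by
    rw [card_insert_of_notMem h1, Nat.card_Icc]
    omega
  have hpar := binVal_mod_two hpos
  rw [← card_sdiff_add_card_inter _ I, hinter] at hcard
  rw [Nat.add_sub_cancel_left, thueMorse_binVal_div_two_pow hpos, Nat.odd_iff, Nat.ModEq]
  split_ifs at hcard hpar <;> omega

theorem stmt18 (n j : ℕ) (hn : 1 ≤ n) (hj1 : 1 ≤ j) (hjn : j ≤ n)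
    (I : Finset ℕ) (hI : I ⊆ Finset.Icc 1 n) :
    (Odd ((insert 1 (Finset.Icc (n - j + 2) n) \ I).card) ↔
      thueMorse (((1 + binVal I) - 1) / 2 ^ (n + 1 - j)) ≡ (1 + binVal I) + j [MOD 2]) :=
  stmt18_general n j hj1 hjn I hI

end AR
end

section
/- For every n ≥ 1 and every subset I ⊆ [n] with 1 ∈ I and I ≠ {k ∈ [n] : k is odd}, there exists a subset J ⊆ [n] with J ≠ I and J ≠ [n] \ I such that I ⇝ J or ([n] \ I) ⇝ J. -/
open Finset Polynomial
open scoped Classical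

namespace AR

lemma subprec_singleton {I : Finset ℕ} {i : ℕ} (hi : i ∈ I) (hi1 : i + 1 ∈ I) :
    SubPrec {i + 1} I := by
  refine ⟨by simp [hi1], ?_, ?_⟩
  · intro R h hmem
    simp only [Finset.mem_singleton] at hmem
    obtain ⟨hne, ⟨a, b, hab⟩, hsub, hmax⟩ := h
    subst hab
    have hab' : a ≤ b := by
      obtain ⟨x, hx⟩ := hne
      rw [Finset.mem_Icc] at hx; omega
    have hmin : (Finset.Icc a b).min' hne = a := by
      apply le_antisymm
      · exact Finset.min'_le _ _ (Finset.mem_Icc.mpr ⟨le_refl a, hab'⟩)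
      · have := Finset.min'_mem (Finset.Icc a b) hne
        rw [Finset.mem_Icc] at this; exact this.1
    have ha : a = i + 1 := by rw [hmin] at hmem; exact hmem
    subst ha
    have hS : Finset.Icc i b ⊆ I := by
      intro j hj
      rw [Finset.mem_Icc] at hj
      rcases eq_or_lt_of_le hj.1 with h' | h'
      · rwa [← h']
      · exact hsub (Finset.mem_Icc.mpr ⟨h', hj.2⟩)
    have heq := hmax (Finset.Icc i b) ⟨i, b, rfl⟩ hS
      (Finset.Icc_subset_Icc (by omega) le_rfl)
    have : i ∈ Finset.Icc (i + 1) b := by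
      rw [← heq]; exact Finset.mem_Icc.mpr ⟨le_rfl, by omega⟩
    rw [Finset.mem_Icc] at this; omega
  · intro j hj
    simp only [Finset.mem_singleton] at hj
    omega

theorem stmt19 (n : ℕ) (hn : 1 ≤ n) (I : Finset ℕ) (hI : I ⊆ Finset.Icc 1 n) (h1 : 1 ∈ I)
    (hodd : I ≠ (Finset.Icc 1 n).filter (fun k => Odd k)) :
    ∃ J : Finset ℕ, J ⊆ Finset.Icc 1 n ∧ J ≠ I ∧ J ≠ Finset.Icc 1 n \ I ∧
      (Step n I J ∨ Step n (Finset.Icc 1 n \ I) J) := by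
  by_cases hc : ∃ i, i ∈ I ∧ i + 1 ∈ I
  · obtain ⟨i, hi, hi1⟩ := hc
    refine ⟨(Finset.Icc 1 n \ I) ∪ {i + 1}, ?_, ?_, ?_, Or.inl ⟨{i + 1}, subprec_singleton hi hi1, rfl⟩⟩
    · exact Finset.union_subset (Finset.sdiff_subset) (by simp [hI hi1])
    · intro heq
      have : i ∈ (Finset.Icc 1 n \ I) ∪ {i + 1} := by rw [heq]; exact hi
      rcases Finset.mem_union.mp this with h | h
      · exact (Finset.mem_sdiff.mp h).2 hi
      · simp at h
    · intro heq
      have : i + 1 ∈ Finset.Icc 1 n \ I := heq ▸ Finset.mem_union_right _ (by simp)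
      exact (Finset.mem_sdiff.mp this).2 hi1
  · by_cases hc2 : ∃ i, i ∈ Finset.Icc 1 n \ I ∧ i + 1 ∈ Finset.Icc 1 n \ I
    · obtain ⟨i, hi, hi1⟩ := hc2
      refine ⟨I ∪ {i + 1}, ?_, ?_, ?_, Or.inr ⟨{i + 1}, subprec_singleton hi hi1, ?_⟩⟩
      · exact Finset.union_subset hI (by simp [(Finset.mem_sdiff.mp hi1).1])
      · intro heq
        exact (Finset.mem_sdiff.mp hi1).2 (heq ▸ Finset.mem_union_right _ (by simp))
      · intro heq
        have : (1 : ℕ) ∈ Finset.Icc 1 n \ I := heq ▸ Finset.mem_union_left _ h1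
        exact (Finset.mem_sdiff.mp this).2 h1
      · have hdd : Finset.Icc 1 n \ (Finset.Icc 1 n \ I) = I := by
          ext x
          simp only [Finset.mem_sdiff, not_and, not_not]
          exact ⟨fun ⟨a, b⟩ => b a, fun h => ⟨hI h, fun _ => h⟩⟩
        rw [hdd]
    · exfalso
      push_neg at hc hc2
      apply hodd
      have key : ∀ k, 1 ≤ k → k ≤ n → (k ∈ I ↔ Odd k) := by
        intro k
        induction k with
        | zero => omega
        | succ k ih =>
          intro _ hkn
          rcases Nat.eq_zero_or_pos k with hk0 | hk1
          · subst hk0; simpa using h1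
          · have ihk := ih hk1 (by omega)
            constructor
            · intro hmem
              have hknot : k ∉ I := fun hk => hc k hk hmem
              have : ¬ Odd k := fun h => hknot (ihk.mpr h)
              rw [Nat.odd_add_one]; simpa using this
            · intro hoddk1
              have hkeven : ¬ Odd k := by
                rw [Nat.odd_add_one] at hoddk1; simpa using hoddk1
              have hknot : k ∉ I := fun hk => hkeven (ihk.mp hk)
              have hksd : k ∈ Finset.Icc 1 n \ I :=
                Finset.mem_sdiff.mpr ⟨Finset.mem_Icc.mpr ⟨hk1, by omega⟩, hknot⟩
              by_contra hk1not
              exact hc2 k hksd (Finset.mem_sdiff.mpr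
                ⟨Finset.mem_Icc.mpr ⟨by omega, by omega⟩, hk1not⟩)
      ext k
      simp only [Finset.mem_filter, Finset.mem_Icc]
      constructor
      · intro hk
        have hk' := Finset.mem_Icc.mp (hI hk)
        exact ⟨hk', (key k hk'.1 hk'.2).mp hk⟩
      · rintro ⟨⟨h1k, hkn⟩, hodk⟩
        exact (key k h1k hkn).mpr hodk

end AR
end
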